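/- For every standard basis vector e_l and every vector ψ of the form f_{mn} = e_m + e_n or g_{mn} = e_m + i e_n (1 ≤ m < n ≤ 2k), one has ⟨ψ ⊗ ψ* | W_{2k} | ψ ⊗ ψ*⟩ = 0, where ψ* denotes complex conjugation of coordinates. Moreover the (2k)² vectors {ψ_α ⊗ ψ_α* : ψ_α ∈ {e_l, f_{mn}, g_{mn}}} are linearly independent, hence span ℂ^{2k} ⊗ ℂ^{2k}. Consequently W_{2k} is an optimal entanglement witness. -/

import Mathlib

/-
For every `ψ`, the Choi matrix satisfies `⟨ψ ⊗ ψ̄| W |ψ ⊗ ψ̄⟩ = ⟨φ| Ψ⁰(|φ⟩⟨φ|) |φ⟩` with `φ = ψ̄`,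
and for `Ψ⁰` this expectation vanishes identically. By polarization, `e_m ⊗ ē_n` is a combination of
`e_m ⊗ ē_m`, `e_n ⊗ ē_n`, `f_{mn} ⊗ f̄_{mn}` and `g_{mn} ⊗ ḡ_{mn}`, so the `(2k)²` zeros of `W`
span the whole space and are therefore linearly independent. A positive `P` with `W - P` still
nonnegative on product vectors is then `0` on every zero of `W`, hence `P = 0`.
-/

open Matrix ComplexOrder Kronecker

noncomputable section

/-- The reduction map `R_k(Y) = Tr(Y)·𝕀_k − Y` on `k × k` complex matrices. -/
def Rmap (k : ℕ) (Y : Matrix (Fin k) (Fin k) ℂ) : Matrix (Fin k) (Fin k) ℂ :=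
  Y.trace • (1 : Matrix (Fin k) (Fin k) ℂ) - Y

/-- The map `Ψ⁰_{2k}` on `2k × 2k` complex matrices (indexed by `Fin k ⊕ Fin k`),
defined blockwise via the reduction map `R_k`. -/
def Psi (k : ℕ) (X : Matrix (Fin k ⊕ Fin k) (Fin k ⊕ Fin k) ℂ) :
    Matrix (Fin k ⊕ Fin k) (Fin k ⊕ Fin k) ℂ :=
  ((k : ℂ))⁻¹ • Matrix.fromBlocks
    ((X.toBlocks₂₂.trace) • (1 : Matrix (Fin k) (Fin k) ℂ))
    (-(X.toBlocks₁₂ + Rmap k X.toBlocks₂₁))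
    (-(X.toBlocks₂₁ + Rmap k X.toBlocks₁₂))
    ((X.toBlocks₁₁.trace) • (1 : Matrix (Fin k) (Fin k) ℂ))

/-- The Choi matrix `W_{2k} = Σ_{i,j} e_{ij} ⊗ Ψ⁰_{2k}(e_{ij})` of the map `Ψ⁰_{2k}`. -/
def Wmat (k : ℕ) :
    Matrix ((Fin k ⊕ Fin k) × (Fin k ⊕ Fin k)) ((Fin k ⊕ Fin k) × (Fin k ⊕ Fin k)) ℂ :=
  ∑ i : Fin k ⊕ Fin k, ∑ j : Fin k ⊕ Fin k,
    (Matrix.single i j (1 : ℂ)) ⊗ₖ Psi k (Matrix.single i j (1 : ℂ))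

/-- The standard basis vector `e_l` of `ℂ^{2k}` (indexed by `Fin (2k)`). -/
def bvec (k : ℕ) (l : Fin (2 * k)) : (Fin k ⊕ Fin k) → ℂ :=
  Pi.single (finSumFinEquiv.symm (Fin.cast (two_mul k) l)) 1

/-- Index type for the family `{e_l, f_{mn}, g_{mn}}`: `4k²` vectors in all. -/
abbrev FamIdx (k : ℕ) :=
  Fin (2 * k) ⊕ ({q : Fin (2 * k) × Fin (2 * k) // q.1 < q.2} × Bool)

/-- The family of vectors `ψ_α ⊗ ψ_α*` with `ψ_α ∈ {e_l, f_{mn} = e_m + e_n,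
g_{mn} = e_m + i e_n}` (the `Bool` distinguishes `f` from `g`). -/
def famVec (k : ℕ) : FamIdx k → ((Fin k ⊕ Fin k) × (Fin k ⊕ Fin k) → ℂ)
  | Sum.inl l => fun p => bvec k l p.1 * (starRingEnd ℂ) (bvec k l p.2)
  | Sum.inr (⟨(m, n), _⟩, false) =>
      fun p => (bvec k m + bvec k n) p.1 * (starRingEnd ℂ) ((bvec k m + bvec k n) p.2)
  | Sum.inr (⟨(m, n), _⟩, true) =>
      fun p => (bvec k m + Complex.I • bvec k n) p.1 *
        (starRingEnd ℂ) ((bvec k m + Complex.I • bvec k n) p.2)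

section Choi

variable {R n m : Type*}

def kronVec [Mul R] (x : n → R) (y : m → R) : n × m → R := fun p => x p.1 * y p.2

variable [Fintype n] [DecidableEq n] [CommSemiring R]

def choiMatrix (Φ : Matrix n n R →ₗ[R] Matrix m m R) : Matrix (n × m) (n × m) R :=
  ∑ i, ∑ j, single i j 1 ⊗ₖ Φ (single i j 1)

lemma choiMatrix_apply (Φ : Matrix n n R →ₗ[R] Matrix m m R) (i j : n) (p q : m) :
    choiMatrix Φ (i, p) (j, q) = Φ (single i j 1) p q := by
  simp only [choiMatrix, Matrix.sum_apply, kroneckerMap_apply]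
  rw [Finset.sum_eq_single i, Finset.sum_eq_single j]
  · simp
  · intro b _ hb
    simp [single_apply_of_ne, hb]
  · simp
  · intro b _ hb
    refine Finset.sum_eq_zero fun c _ => ?_
    simp [single_apply_of_ne, hb]
  · simp

lemma linearMap_vecMulVec_apply (Φ : Matrix n n R →ₗ[R] Matrix m m R) (x y : n → R) (p q : m) :
    Φ (vecMulVec x y) p q = ∑ i, ∑ j, x i * y j * Φ (single i j 1) p q := by
  conv_lhs => rw [matrix_eq_sum_single (vecMulVec x y)]
  simp only [map_sum, Matrix.sum_apply, vecMulVec_apply]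
  refine Finset.sum_congr rfl fun i _ => Finset.sum_congr rfl fun j _ => ?_
  rw [← mul_one (x i * y j), ← smul_eq_mul _ (1 : R), ← smul_single, map_smul]
  simp

variable [Fintype m] [StarRing R]

lemma star_kronVec_dotProduct_choiMatrix_mulVec (Φ : Matrix n n R →ₗ[R] Matrix m m R)
    (x : n → R) (y : m → R) :
    star (kronVec x y) ⬝ᵥ choiMatrix Φ *ᵥ kronVec x y =
      star y ⬝ᵥ Φ (vecMulVec (star x) x) *ᵥ y := by
  simp only [dotProduct, mulVec, Fintype.sum_prod_type, choiMatrix_apply,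
    linearMap_vecMulVec_apply, kronVec, Pi.star_apply, star_mul', Finset.mul_sum, Finset.sum_mul]
  rw [Finset.sum_comm]
  refine Finset.sum_congr rfl fun p _ => ?_
  conv_rhs => rw [Finset.sum_comm]
  refine Finset.sum_congr rfl fun i _ => ?_
  rw [Finset.sum_comm]
  refine Finset.sum_congr rfl fun q _ => Finset.sum_congr rfl fun j _ => ?_
  ring

end Choi

def psiLinearMap (k : ℕ) :
    Matrix (Fin k ⊕ Fin k) (Fin k ⊕ Fin k) ℂ →ₗ[ℂ] Matrix (Fin k ⊕ Fin k) (Fin k ⊕ Fin k) ℂ where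
  toFun := Psi k
  map_add' X Y := by
    ext (p | p) (q | q) <;>
      simp only [Psi, Rmap, trace, diag_apply, toBlocks₁₁, toBlocks₁₂, toBlocks₂₁, toBlocks₂₂,
        Matrix.of_apply, Matrix.neg_apply, Matrix.add_apply, Matrix.sub_apply, Matrix.smul_apply,
        fromBlocks_apply₁₁, fromBlocks_apply₁₂, fromBlocks_apply₂₁, fromBlocks_apply₂₂,
        Finset.sum_add_distrib, smul_eq_mul] <;>
      ring
  map_smul' c X := by
    ext (p | p) (q | q) <;>
      simp only [Psi, Rmap, trace, diag_apply, toBlocks₁₁, toBlocks₁₂, toBlocks₂₁, toBlocks₂₂,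
        Matrix.of_apply, Matrix.neg_apply, Matrix.add_apply, Matrix.sub_apply, Matrix.smul_apply,
        fromBlocks_apply₁₁, fromBlocks_apply₁₂, fromBlocks_apply₂₁, fromBlocks_apply₂₂,
        ← Finset.mul_sum, smul_eq_mul, RingHom.id_apply] <;>
      ring

lemma Wmat_eq_choiMatrix (k : ℕ) : Wmat k = choiMatrix (psiLinearMap k) := rfl

lemma vecMulVec_sumElim {R l m n o : Type*} [Mul R] (u : l → R) (v : m → R) (u' : n → R)
    (v' : o → R) :
    vecMulVec (Sum.elim u v) (Sum.elim u' v') =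
      fromBlocks (vecMulVec u u') (vecMulVec u v') (vecMulVec v u') (vecMulVec v v') := by
  ext (i | i) (j | j) <;> rfl

/- Writing `φ = (u, v)`, each diagonal block contributes `‖u‖²‖v‖² / k`, and each off-diagonal
block `-‖u‖²‖v‖² / k`: the terms `(u* v)²` coming from the trace part of `R_k` cancel. -/
lemma star_dotProduct_Psi_vecMulVec_mulVec_self (k : ℕ) (φ : Fin k ⊕ Fin k → ℂ) :
    star φ ⬝ᵥ Psi k (vecMulVec φ (star φ)) *ᵥ φ = 0 := by
  obtain ⟨u, v, rfl⟩ : ∃ u v, φ = Sum.elim u v :=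
    ⟨φ ∘ Sum.inl, φ ∘ Sum.inr, by ext (_ | _) <;> rfl⟩
  simp only [Psi, Rmap, Function.star_sumElim, vecMulVec_sumElim, toBlocks_fromBlocks₁₁,
    toBlocks_fromBlocks₁₂, toBlocks_fromBlocks₂₁, toBlocks_fromBlocks₂₂, trace_vecMulVec,
    smul_mulVec, fromBlocks_mulVec, Sum.elim_comp_inl, Sum.elim_comp_inr, add_mulVec, sub_mulVec,
    neg_mulVec, one_mulVec, vecMulVec_mulVec, sumElim_dotProduct_sumElim, dotProduct_smul,
    dotProduct_add, dotProduct_sub, dotProduct_neg, op_smul_eq_smul, smul_eq_mul]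
  rw [dotProduct_comm v, dotProduct_comm u (star u), dotProduct_comm v, dotProduct_comm u]
  ring

lemma star_kronVec_dotProduct_Wmat_mulVec (k : ℕ) (ψ : Fin k ⊕ Fin k → ℂ) :
    star (kronVec ψ (star ψ)) ⬝ᵥ Wmat k *ᵥ kronVec ψ (star ψ) = 0 := by
  have h := star_dotProduct_Psi_vecMulVec_mulVec_self k (star ψ)
  rw [star_star] at h
  rw [Wmat_eq_choiMatrix, star_kronVec_dotProduct_choiMatrix_mulVec, star_star]
  exact h

section Polarization

variable {n : Type*}

lemma two_smul_kronVec_star (a b : n → ℂ) :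
    (2 : ℂ) • kronVec a (star b) =
      kronVec (a + b) (star (a + b))
        + Complex.I • kronVec (a + Complex.I • b) (star (a + Complex.I • b))
        - (1 + Complex.I) • (kronVec a (star a) + kronVec b (star b)) := by
  ext p
  simp only [kronVec, Pi.add_apply, Pi.sub_apply, Pi.smul_apply, Pi.star_apply, star_add,
    star_smul, smul_eq_mul, Complex.star_def, Complex.conj_I]
  ring_nf
  simp only [Complex.I_sq, Complex.I_pow_three]
  ring

lemma two_smul_kronVec_star_swap (a b : n → ℂ) :
    (2 : ℂ) • kronVec b (star a) =
      kronVec (a + b) (star (a + b))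
        - Complex.I • kronVec (a + Complex.I • b) (star (a + Complex.I • b))
        - (1 - Complex.I) • (kronVec a (star a) + kronVec b (star b)) := by
  ext p
  simp only [kronVec, Pi.add_apply, Pi.sub_apply, Pi.smul_apply, Pi.star_apply, star_add,
    star_smul, smul_eq_mul, Complex.star_def, Complex.conj_I]
  ring_nf
  simp only [Complex.I_sq, Complex.I_pow_three]
  ring

lemma kronVec_star_mem_of_polarization {S : Submodule ℂ (n × n → ℂ)} {a b : n → ℂ}
    (ha : kronVec a (star a) ∈ S) (hb : kronVec b (star b) ∈ S)
    (hab : kronVec (a + b) (star (a + b)) ∈ S)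
    (habI : kronVec (a + Complex.I • b) (star (a + Complex.I • b)) ∈ S) :
    kronVec a (star b) ∈ S ∧ kronVec b (star a) ∈ S := by
  have hsum := S.add_mem ha hb
  constructor
  · rw [← S.smul_mem_iff (two_ne_zero' ℂ), two_smul_kronVec_star]
    exact S.sub_mem (S.add_mem hab (S.smul_mem _ habI)) (S.smul_mem _ hsum)
  · rw [← S.smul_mem_iff (two_ne_zero' ℂ), two_smul_kronVec_star_swap]
    exact S.sub_mem (S.sub_mem hab (S.smul_mem _ habI)) (S.smul_mem _ hsum)

end Polarization

lemma kronVec_single_star_single {R n m : Type*} [Semiring R] [StarRing R] [DecidableEq n]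
    [DecidableEq m] (x : n) (y : m) :
    kronVec (Pi.single x (1 : R)) (star (Pi.single y 1)) = Pi.single (x, y) 1 := by
  ext ⟨i, j⟩
  by_cases hi : i = x <;> by_cases hj : j = y <;> simp [kronVec, hi, hj]

lemma exists_bvec_eq (k : ℕ) (x : Fin k ⊕ Fin k) : ∃ l, bvec k l = Pi.single x 1 :=
  ⟨Fin.cast (two_mul k).symm (finSumFinEquiv x), by simp [bvec]⟩

def famBase (k : ℕ) : FamIdx k → Fin k ⊕ Fin k → ℂ
  | Sum.inl l => bvec k l
  | Sum.inr (⟨(m, n), _⟩, false) => bvec k m + bvec k n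
  | Sum.inr (⟨(m, n), _⟩, true) => bvec k m + Complex.I • bvec k n

lemma famVec_apply (k : ℕ) (t : FamIdx k) :
    famVec k t = kronVec (famBase k t) (star (famBase k t)) := by
  rcases t with l | ⟨⟨⟨m, n⟩, h⟩, _ | _⟩ <;> rfl

lemma span_range_famVec (k : ℕ) : Submodule.span ℂ (Set.range (famVec k)) = ⊤ := by
  set S := Submodule.span ℂ (Set.range (famVec k))
  have hfam (t : FamIdx k) : kronVec (famBase k t) (star (famBase k t)) ∈ S := by
    rw [← famVec_apply]
    exact Submodule.subset_span ⟨t, rfl⟩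
  have hbasis (l l' : Fin (2 * k)) : kronVec (bvec k l) (star (bvec k l')) ∈ S := by
    rcases lt_trichotomy l l' with h | rfl | h
    · exact (kronVec_star_mem_of_polarization (hfam (.inl l)) (hfam (.inl l'))
        (hfam (.inr (⟨(l, l'), h⟩, false))) (hfam (.inr (⟨(l, l'), h⟩, true)))).1
    · exact hfam (.inl l)
    · exact (kronVec_star_mem_of_polarization (hfam (.inl l')) (hfam (.inl l))
        (hfam (.inr (⟨(l', l), h⟩, false))) (hfam (.inr (⟨(l', l), h⟩, true)))).2
  rw [eq_top_iff, ← (Pi.basisFun ℂ _).span_eq, Submodule.span_le]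
  rintro _ ⟨⟨x, y⟩, rfl⟩
  obtain ⟨l, hl⟩ := exists_bvec_eq k x
  obtain ⟨l', hl'⟩ := exists_bvec_eq k y
  rw [Pi.basisFun_apply, ← kronVec_single_star_single, ← hl, ← hl']
  exact hbasis l l'

lemma card_subtype_fst_lt (α : Type*) [Fintype α] [LinearOrder α] :
    Fintype.card {q : α × α // q.1 < q.2} = (Fintype.card α).choose 2 := by
  rw [Fintype.card_subtype, ← Finset.card_univ, ← Finset.card_product_filter_lt,
    Finset.univ_product_univ]

lemma card_famIdx (k : ℕ) :
    Fintype.card (FamIdx k) = Fintype.card ((Fin k ⊕ Fin k) × (Fin k ⊕ Fin k)) := by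
  simp only [FamIdx, Fintype.card_sum, Fintype.card_prod, card_subtype_fst_lt, Fintype.card_fin,
    Fintype.card_bool]
  have h : ((2 * k : ℕ) + (2 * k).choose 2 * 2 : ℚ) = (k + k) * (k + k) := by
    rw [Nat.cast_choose_two]
    push_cast
    ring
  exact_mod_cast h

lemma linearIndependent_famVec (k : ℕ) : LinearIndependent ℂ (famVec k) :=
  linearIndependent_of_top_le_span_of_card_eq_finrank (span_range_famVec k).ge
    (by rw [card_famIdx, Module.finrank_fintype_fun_eq_card])

lemma Matrix.PosSemidef.mulVec_eq_zero_of_re_dotProduct_nonpos {n : Type*} [Fintype n]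
    {P : Matrix n n ℂ} (hP : P.PosSemidef) {v : n → ℂ} (h : (star v ⬝ᵥ P *ᵥ v).re ≤ 0) :
    P *ᵥ v = 0 := by
  rw [← hP.dotProduct_mulVec_zero_iff]
  have hnonneg := hP.dotProduct_mulVec_nonneg v
  exact le_antisymm (Complex.le_def.mpr ⟨h, (Complex.le_def.mp hnonneg).2.symm⟩) hnonneg

lemma Matrix.eq_zero_of_mulVec_eq_zero_of_span_eq_top {R m n ι : Type*} [CommSemiring R]
    [Fintype n] [DecidableEq n] {P : Matrix m n R} {v : ι → n → R}
    (hv : Submodule.span R (Set.range v) = ⊤) (h : ∀ i, P *ᵥ v i = 0) : P = 0 := by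
  apply toLin'.injective
  rw [map_zero]
  exact LinearMap.ext_on_range hv h

/- The optimality criterion of Lewenstein et al.: `P` kills every product vector at which `W`
vanishes, since `W - P` stays nonnegative there. -/
lemma Matrix.PosSemidef.eq_zero_of_witness_sub_of_span_zeros {n m ι : Type*} [Fintype n]
    [Fintype m] [DecidableEq n] [DecidableEq m] {W P : Matrix (n × m) (n × m) ℂ}
    (hP : P.PosSemidef) {a : ι → n → ℂ} {b : ι → m → ℂ}
    (hspan : Submodule.span ℂ (Set.range fun i => kronVec (a i) (b i)) = ⊤)
    (hzero : ∀ i, star (kronVec (a i) (b i)) ⬝ᵥ W *ᵥ kronVec (a i) (b i) = 0)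
    (hWP : ∀ x y, 0 ≤ (star (kronVec x y) ⬝ᵥ (W - P) *ᵥ kronVec x y).re) : P = 0 := by
  refine eq_zero_of_mulVec_eq_zero_of_span_eq_top hspan fun i =>
    hP.mulVec_eq_zero_of_re_dotProduct_nonpos ?_
  have h := hWP (a i) (b i)
  rw [sub_mulVec, dotProduct_sub, hzero i, zero_sub, Complex.neg_re] at h
  linarith

theorem stmt17_general (k : ℕ) :
    (∀ t : FamIdx k, star (famVec k t) ⬝ᵥ (Wmat k).mulVec (famVec k t) = 0) ∧
    LinearIndependent ℂ (famVec k) ∧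
    Submodule.span ℂ (Set.range (famVec k)) = ⊤ ∧
    (∀ P : Matrix ((Fin k ⊕ Fin k) × (Fin k ⊕ Fin k)) ((Fin k ⊕ Fin k) × (Fin k ⊕ Fin k)) ℂ,
      P.PosSemidef →
      (∀ a b : (Fin k ⊕ Fin k) → ℂ,
        0 ≤ (star (fun p => a p.1 * b p.2 : (Fin k ⊕ Fin k) × (Fin k ⊕ Fin k) → ℂ) ⬝ᵥ
            (Wmat k - P).mulVec (fun p => a p.1 * b p.2)).re) →
      P = 0) := by
  have hzero (t : FamIdx k) : star (famVec k t) ⬝ᵥ Wmat k *ᵥ famVec k t = 0 := by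
    rw [famVec_apply]
    exact star_kronVec_dotProduct_Wmat_mulVec k _
  have hspan := span_range_famVec k
  refine ⟨hzero, linearIndependent_famVec k, hspan, fun P hP hWP => ?_⟩
  rw [funext (famVec_apply k)] at hspan
  exact hP.eq_zero_of_witness_sub_of_span_zeros hspan
    (fun t => star_kronVec_dotProduct_Wmat_mulVec k _) hWP

theorem stmt17 (k : ℕ) (hk : 2 ≤ k) :
    (∀ t : FamIdx k, star (famVec k t) ⬝ᵥ (Wmat k).mulVec (famVec k t) = 0) ∧
    LinearIndependent ℂ (famVec k) ∧
    Submodule.span ℂ (Set.range (famVec k)) = ⊤ ∧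
    (∀ P : Matrix ((Fin k ⊕ Fin k) × (Fin k ⊕ Fin k)) ((Fin k ⊕ Fin k) × (Fin k ⊕ Fin k)) ℂ,
      P.PosSemidef →
      (∀ a b : (Fin k ⊕ Fin k) → ℂ,
        0 ≤ (star (fun p => a p.1 * b p.2 : (Fin k ⊕ Fin k) × (Fin k ⊕ Fin k) → ℂ) ⬝ᵥ
            (Wmat k - P).mulVec (fun p => a p.1 * b p.2)).re) →
      P = 0) :=
  stmt17_general k
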